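/- arXiv:1409.7095 — 2 statements merged into one kernel-verified Lean document; each statement's English description precedes it below -/
import Mathlib

section
/- Suppose φ(ω, x) is a family of functions smooth in ω with ∂_ω φ = L₊^{-1}[(2ω + βW)φ] in the sense that L₊[∂_ω φ] = (2ω + βW)φ, where L₊ is self-adjoint. Then ⟨L₊^{-1}[(2ω+βW)φ], (2ω+βW)φ⟩ = ⟨∂_ω φ, (2ω+βW)φ⟩ = (1/2)∂_ω[∫(2ω + βW(x))φ²(x)dx] - ∫φ²(x)dx. -/
/-!
Pointwise, the product rule gives
`∂_ω[(2ω + βW)φ²] = 2φ² + 2 (∂_ω φ)(2ω + βW)φ`;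
integrating this identity over `x` and solving for the cross term yields the claim.
-/

open MeasureTheory

theorem HasDerivAt.affine_mul_sq {f : ℝ → ℝ} {f' c ω : ℝ} (hf : HasDerivAt f f' ω) :
    HasDerivAt (fun t => (2 * t + c) * f t ^ 2)
      (2 * f ω ^ 2 + 2 * (f' * ((2 * ω + c) * f ω))) ω := by
  have hlin : HasDerivAt (fun t : ℝ => 2 * t + c) 2 ω := by
    simpa using ((hasDerivAt_id ω).const_mul 2).add_const c
  refine (hlin.mul (hf.fun_pow 2)).congr_deriv ?_
  push_cast
  ring

theorem integral_eq_half_integral_sub {α : Type*} [MeasurableSpace α] {μ : Measure α}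
    {g u v : α → ℝ} (hu : Integrable u μ) (hv : Integrable v μ)
    (hg : ∀ᵐ x ∂μ, g x = 2 * u x + 2 * v x) :
    ∫ x, v x ∂μ = 1 / 2 * ∫ x, g x ∂μ - ∫ x, u x ∂μ := by
  have hsplit : ∫ x, g x ∂μ = 2 * ∫ x, u x ∂μ + 2 * ∫ x, v x ∂μ := by
    rw [integral_congr_ae hg, integral_add (hu.const_mul 2) (hv.const_mul 2),
      integral_const_mul, integral_const_mul]
  rw [hsplit]
  ring

theorem VK_identity_general (d : ℕ) (β ω : ℝ)
    (W : EuclideanSpace ℝ (Fin d) → ℝ)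
    (φ : ℝ → EuclideanSpace ℝ (Fin d) → ℝ)
    (ψ : EuclideanSpace ℝ (Fin d) → ℝ)
    (hψ : ∀ x, HasDerivAt (fun ω' => φ ω' x) (ψ x) ω)
    (g : EuclideanSpace ℝ (Fin d) → ℝ)
    (hg : ∀ x, HasDerivAt (fun ω' => (2 * ω' + β * W x) * (φ ω' x) ^ 2) (g x) ω)
    (hint1 : Integrable (fun x => (φ ω x) ^ 2) volume)
    (hint2 : Integrable (fun x => ψ x * ((2 * ω + β * W x) * φ ω x)) volume) :
    ∫ x, ψ x * ((2 * ω + β * W x) * φ ω x) ∂volume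
      = (1 / 2) * (∫ x, g x ∂volume) - ∫ x, (φ ω x) ^ 2 ∂volume :=
  integral_eq_half_integral_sub hint1 hint2 <| .of_forall fun x =>
    (hg x).unique (hψ x).affine_mul_sq

theorem VK_identity (d : ℕ) (hd : 1 ≤ d) (β ω : ℝ)
    (W : EuclideanSpace ℝ (Fin d) → ℝ) (hW : ∃ C, ∀ x, |W x| ≤ C)
    (φ : ℝ → EuclideanSpace ℝ (Fin d) → ℝ)
    (ψ : EuclideanSpace ℝ (Fin d) → ℝ)
    (hψ : ∀ x, HasDerivAt (fun ω' => φ ω' x) (ψ x) ω)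
    (g : EuclideanSpace ℝ (Fin d) → ℝ)
    (hg : ∀ x, HasDerivAt (fun ω' => (2 * ω' + β * W x) * (φ ω' x) ^ 2) (g x) ω)
    (hswap : HasDerivAt (fun ω' => ∫ x, (2 * ω' + β * W x) * (φ ω' x) ^ 2 ∂volume)
      (∫ x, g x ∂volume) ω)
    (hint1 : Integrable (fun x => (φ ω x) ^ 2) volume)
    (hint2 : Integrable (fun x => ψ x * ((2 * ω + β * W x) * φ ω x)) volume)
    (hint3 : Integrable g volume) :
    ∫ x, ψ x * ((2 * ω + β * W x) * φ ω x) ∂volume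
      = (1 / 2) * (∫ x, g x ∂volume) - ∫ x, (φ ω x) ^ 2 ∂volume :=
  VK_identity_general d β ω W φ ψ hψ g hg hint1 hint2
end

section
/- For the scaled soliton family with W = 1: define μ(ω) = 1 - ω² - βω and I(ω) = (2ω+β)μ(ω)^{c} with c = 2/(p-1) - d/2 > 0. Then I is strictly increasing at ω iff 2μ(ω) > c(2ω+β)², and the stationary points of I in the existence interval are exactly ω = -β/2 ± (1/2)√((β²+4)/(2c+1)). -/
/-!
Writing `μ = 1 - ω² - βω`, the derivative of `(2ω + β) μ^c` is `μ^(c-1) (2μ - c(2ω + β)²)`.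
Since `μ > 0` on the existence interval, its sign is that of `2μ - c(2ω + β)²`, and the identity
`4μ = β² + 4 - (2ω + β)²` turns the vanishing of this factor into `(2c + 1)(2ω + β)² = β² + 4`.
-/

open Real Set

lemma one_sub_sq_sub_mul_pos_of_mem_Ioo {β ω : ℝ}
    (hω : ω ∈ Ioo ((-β - √(β ^ 2 + 4)) / 2) ((-β + √(β ^ 2 + 4)) / 2)) :
    0 < 1 - ω ^ 2 - β * ω := by
  have hsq : √(β ^ 2 + 4) ^ 2 = β ^ 2 + 4 := sq_sqrt (by positivity)
  nlinarith [hω.1, hω.2]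

theorem HasDerivAt.mul_rpow_const {f g : ℝ → ℝ} {f' g' x : ℝ} (c : ℝ)
    (hf : HasDerivAt f f' x) (hg : HasDerivAt g g' x) (hpos : 0 < g x) :
    HasDerivAt (fun y => f y * g y ^ c) (g x ^ (c - 1) * (f' * g x + c * f x * g')) x := by
  refine (hf.mul (hg.rpow_const (p := c) (Or.inl hpos.ne'))).congr_deriv ?_
  rw [rpow_sub_one hpos.ne']
  field_simp

lemma hasDerivAt_two_mul_add_mul_rpow {β ω : ℝ} (c : ℝ) (hμ : 0 < 1 - ω ^ 2 - β * ω) :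
    HasDerivAt (fun ω' : ℝ => (2 * ω' + β) * (1 - ω' ^ 2 - β * ω') ^ c)
      ((1 - ω ^ 2 - β * ω) ^ (c - 1) * (2 * (1 - ω ^ 2 - β * ω) - c * (2 * ω + β) ^ 2)) ω := by
  have hlin : HasDerivAt (fun ω' : ℝ => 2 * ω' + β) 2 ω := by
    simpa using ((hasDerivAt_id ω).const_mul 2).add_const β
  have hquad : HasDerivAt (fun ω' : ℝ => 1 - ω' ^ 2 - β * ω') (-2 * ω - β) ω :=
    (((hasDerivAt_pow 2 ω).const_sub 1).sub ((hasDerivAt_id' ω).const_mul β)).congr_deriv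
      (by ring)
  convert hlin.mul_rpow_const c hquad hμ using 2
  ring

lemma two_mul_quadratic_eq_iff {β c ω : ℝ} (hc : 0 < 2 * c + 1) :
    2 * (1 - ω ^ 2 - β * ω) = c * (2 * ω + β) ^ 2 ↔
      ω = -β / 2 - (1 / 2) * √((β ^ 2 + 4) / (2 * c + 1)) ∨
        ω = -β / 2 + (1 / 2) * √((β ^ 2 + 4) / (2 * c + 1)) := by
  set t := √((β ^ 2 + 4) / (2 * c + 1))
  have ht : t ^ 2 = (β ^ 2 + 4) / (2 * c + 1) := sq_sqrt (by positivity)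
  have hsq_eq : 2 * (1 - ω ^ 2 - β * ω) = c * (2 * ω + β) ^ 2 ↔ (2 * ω + β) ^ 2 = t ^ 2 := by
    rw [ht, eq_div_iff hc.ne']
    constructor
    · intro h; linear_combination (-2) * h
    · intro h; linear_combination (-1 / 2) * h
  rw [hsq_eq, sq_eq_sq_iff_eq_or_eq_neg, or_comm]
  refine or_congr ⟨fun h => ?_, fun h => ?_⟩ ⟨fun h => ?_, fun h => ?_⟩ <;> linarith

theorem VK_monotonicity_and_stationary_points_general (β : ℝ) (c : ℝ) (hcpos : 0 < c) (ω : ℝ)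
    (hω : ω ∈ Set.Ioo ((-β - Real.sqrt (β ^ 2 + 4)) / 2) ((-β + Real.sqrt (β ^ 2 + 4)) / 2)) :
    (0 < deriv (fun ω' : ℝ => (2 * ω' + β) * (1 - ω' ^ 2 - β * ω') ^ c) ω ↔
      c * (2 * ω + β) ^ 2 < 2 * (1 - ω ^ 2 - β * ω)) ∧
    (deriv (fun ω' : ℝ => (2 * ω' + β) * (1 - ω' ^ 2 - β * ω') ^ c) ω = 0 ↔
      (ω = -β / 2 - (1 / 2) * Real.sqrt ((β ^ 2 + 4) / (2 * c + 1)) ∨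
       ω = -β / 2 + (1 / 2) * Real.sqrt ((β ^ 2 + 4) / (2 * c + 1)))) := by
  have hμ := one_sub_sq_sub_mul_pos_of_mem_Ioo hω
  have hpow : 0 < (1 - ω ^ 2 - β * ω) ^ (c - 1) := rpow_pos_of_pos hμ _
  rw [(hasDerivAt_two_mul_add_mul_rpow c hμ).deriv, mul_pos_iff_of_pos_left hpow, sub_pos,
    mul_eq_zero, or_iff_right hpow.ne', sub_eq_zero]
  exact ⟨Iff.rfl, two_mul_quadratic_eq_iff (by linarith)⟩

theorem VK_monotonicity_and_stationary_points (d : ℕ) (hd : 1 ≤ d) (p β : ℝ)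
    (hp : 1 < p) (hp' : p < 1 + 4 / (d : ℝ)) (c : ℝ)
    (hc : c = 2 / (p - 1) - (d : ℝ) / 2) (hcpos : 0 < c) (ω : ℝ)
    (hω : ω ∈ Set.Ioo ((-β - Real.sqrt (β ^ 2 + 4)) / 2) ((-β + Real.sqrt (β ^ 2 + 4)) / 2)) :
    (0 < deriv (fun ω' : ℝ => (2 * ω' + β) * (1 - ω' ^ 2 - β * ω') ^ c) ω ↔
      c * (2 * ω + β) ^ 2 < 2 * (1 - ω ^ 2 - β * ω)) ∧
    (deriv (fun ω' : ℝ => (2 * ω' + β) * (1 - ω' ^ 2 - β * ω') ^ c) ω = 0 ↔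
      (ω = -β / 2 - (1 / 2) * Real.sqrt ((β ^ 2 + 4) / (2 * c + 1)) ∨
       ω = -β / 2 + (1 / 2) * Real.sqrt ((β ^ 2 + 4) / (2 * c + 1)))) :=
  VK_monotonicity_and_stationary_points_general β c hcpos ω hω
end
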